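/- Suppose all biases are in region R, min(B) ≠ max(B), and the influence graph has a directed path from some agent with belief < max(B) to some agent with belief = max(B) in every intermediate state; then after n−1 applications of the update (n = number of agents), the maximum strictly decreases: max(μ^{n−1}(B)) < max(B). -/

import Mathlib

open Finset

/-! Let `M` be the initial maximum. The update never raises the maximum, and an agent strictly
below the current maximum stays strictly below it: each bias moves it by less than the gap to its
neighbour, and the weights sum to at most one. So while the maximum is still `M`, the set of agents
below `M` only grows, and the path hypothesis gives an agent at `M` with an in-neighbour below `M`,
whose bias pulls it below `M` too. The set thus gains an agent at every step, and after `n - 1`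
steps either the maximum has already dropped or all `n` agents are below `M`. -/

/-- A bias function is in the receptive-resistant region R. -/
def InRegionR (β : ℝ → ℝ) : Prop :=
  (∀ x : ℝ, x < 0 → x < β x ∧ β x < 0) ∧
  (∀ x : ℝ, 0 < x → 0 < β x ∧ β x < x) ∧
  β 0 = 0

namespace InRegionR

variable {β : ℝ → ℝ} {x y : ℝ}

theorem nonpos (hβ : InRegionR β) (hx : x ≤ 0) : β x ≤ 0 := by
  rcases hx.lt_or_eq with hx | rfl
  · exact (hβ.1 x hx).2.le
  · exact hβ.2.2.le

theorem neg (hβ : InRegionR β) (hx : x < 0) : β x < 0 :=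
  (hβ.1 x hx).2

theorem lt_of_le (hβ : InRegionR β) (hxy : x ≤ y) (hy : 0 < y) : β x < y := by
  rcases le_or_gt x 0 with hx | hx
  · exact (hβ.nonpos hx).trans_lt hy
  · exact (hβ.2.1 x hx).2.trans_le hxy

end InRegionR

section BiasUpdate

variable {A : Type*} (N : A → Finset A) (w : A → A → ℝ) (β : A → A → ℝ → ℝ)

noncomputable def biasUpdate (C : A → ℝ) (i : A) : ℝ :=
  C i + ∑ j ∈ N i, w j i * β i j (C j - C i)

variable {N w β} {C : A → ℝ} {i : A}

theorem biasUpdate_lt_of_lt (hw : ∀ i, ∀ j ∈ N i, 0 < w j i)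
    (hsum : ∀ i, ∑ j ∈ N i, w j i ≤ 1) (hβ : ∀ i, ∀ j ∈ N i, InRegionR (β i j))
    {s : ℝ} (hC : ∀ j ∈ N i, C j ≤ s) (hi : C i < s) : biasUpdate N w β C i < s := by
  have hdrift : ∑ j ∈ N i, w j i * β i j (C j - C i) < s - C i := by
    rcases (N i).eq_empty_or_nonempty with hN | hN
    · simpa [hN] using hi
    · calc ∑ j ∈ N i, w j i * β i j (C j - C i)
          < ∑ j ∈ N i, w j i * (s - C i) :=
            sum_lt_sum_of_nonempty hN fun j hj => mul_lt_mul_of_pos_left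
              ((hβ i j hj).lt_of_le (by linarith [hC j hj]) (by linarith)) (hw i j hj)
        _ = (∑ j ∈ N i, w j i) * (s - C i) := (sum_mul ..).symm
        _ ≤ s - C i := mul_le_of_le_one_left (by linarith) (hsum i)
  unfold biasUpdate
  linarith

theorem biasUpdate_le_self (hw : ∀ i, ∀ j ∈ N i, 0 ≤ w j i)
    (hβ : ∀ i, ∀ j ∈ N i, InRegionR (β i j)) (hC : ∀ j ∈ N i, C j ≤ C i) :
    biasUpdate N w β C i ≤ C i := by
  have hdrift : ∑ j ∈ N i, w j i * β i j (C j - C i) ≤ 0 := sum_nonpos fun j hj =>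
    mul_nonpos_of_nonneg_of_nonpos (hw i j hj) ((hβ i j hj).nonpos (by linarith [hC j hj]))
  unfold biasUpdate
  linarith

theorem biasUpdate_lt_self (hw : ∀ i, ∀ j ∈ N i, 0 < w j i)
    (hβ : ∀ i, ∀ j ∈ N i, InRegionR (β i j)) (hC : ∀ j ∈ N i, C j ≤ C i) {j : A}
    (hj : j ∈ N i) (hji : C j < C i) : biasUpdate N w β C i < C i := by
  have hdrift : ∑ j ∈ N i, w j i * β i j (C j - C i) < 0 :=
    sum_neg' (fun j hj => mul_nonpos_of_nonneg_of_nonpos (hw i j hj).le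
        ((hβ i j hj).nonpos (by linarith [hC j hj])))
      ⟨j, hj, mul_neg_of_pos_of_neg (hw i j hj) ((hβ i j hj).neg (by linarith))⟩
  unfold biasUpdate
  linarith

variable [Fintype A] [Nonempty A]

theorem sup'_biasUpdate_le (hw : ∀ i, ∀ j ∈ N i, 0 < w j i)
    (hsum : ∀ i, ∑ j ∈ N i, w j i ≤ 1) (hβ : ∀ i, ∀ j ∈ N i, InRegionR (β i j))
    (C : A → ℝ) :
    univ.sup' univ_nonempty (biasUpdate N w β C) ≤ univ.sup' univ_nonempty C := by
  refine sup'_le _ _ fun i _ => ?_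
  have hle : ∀ j, C j ≤ univ.sup' univ_nonempty C := fun j => le_sup' C (mem_univ j)
  rcases (hle i).lt_or_eq with hi | hi
  · exact (biasUpdate_lt_of_lt hw hsum hβ (fun j _ => hle j) hi).le
  · exact (biasUpdate_le_self (fun i j hj => (hw i j hj).le) hβ fun j _ => hi ▸ hle j).trans
      hi.le

theorem sup'_iterate_biasUpdate_le (hw : ∀ i, ∀ j ∈ N i, 0 < w j i)
    (hsum : ∀ i, ∑ j ∈ N i, w j i ≤ 1) (hβ : ∀ i, ∀ j ∈ N i, InRegionR (β i j))
    (C : A → ℝ) (k : ℕ) :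
    univ.sup' univ_nonempty ((biasUpdate N w β)^[k] C) ≤ univ.sup' univ_nonempty C := by
  induction k with
  | zero => rfl
  | succ k ih =>
    rw [Function.iterate_succ_apply']
    exact (sup'_biasUpdate_le hw hsum hβ _).trans ih

theorem filter_lt_sup'_ssubset_biasUpdate [DecidableEq A]
    (hw : ∀ i, ∀ j ∈ N i, 0 < w j i) (hsum : ∀ i, ∑ j ∈ N i, w j i ≤ 1)
    (hβ : ∀ i, ∀ j ∈ N i, InRegionR (β i j)) {j : A} (hj : j ∈ N i)
    (hjC : C j < univ.sup' univ_nonempty C) (hiC : C i = univ.sup' univ_nonempty C) :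
    ({a | C a < univ.sup' univ_nonempty C} : Finset A) ⊂
      ({a | biasUpdate N w β C a < univ.sup' univ_nonempty C} : Finset A) := by
  have hle : ∀ a, C a ≤ univ.sup' univ_nonempty C := fun a => le_sup' C (mem_univ a)
  refine ssubset_iff.mpr
    ⟨i, fun h => (mem_filter.mp h).2.ne hiC, insert_subset_iff.mpr ⟨?_, ?_⟩⟩
  · rw [mem_filter, ← hiC]
    exact ⟨mem_univ i, biasUpdate_lt_self hw hβ (fun a _ => hiC ▸ hle a) hj (hiC ▸ hjC)⟩
  · intro a ha
    rw [mem_filter] at ha ⊢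
    exact ⟨mem_univ a, biasUpdate_lt_of_lt hw hsum hβ (fun b _ => hle b) ha.2⟩

theorem sup'_iterate_lt_or_card_le [DecidableEq A]
    (hw : ∀ i, ∀ j ∈ N i, 0 < w j i) (hsum : ∀ i, ∑ j ∈ N i, w j i ≤ 1)
    (hβ : ∀ i, ∀ j ∈ N i, InRegionR (β i j))
    {B : A → ℝ} (hedge : ∀ k, let C := (biasUpdate N w β)^[k] B;
      (∃ a, C a < univ.sup' univ_nonempty C) →
        ∃ i, ∃ j ∈ N i, C j < univ.sup' univ_nonempty C ∧ C i = univ.sup' univ_nonempty C)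
    (hB : ∃ a, B a < univ.sup' univ_nonempty B) (k : ℕ) :
    (univ.sup' univ_nonempty ((biasUpdate N w β)^[k] B) < univ.sup' univ_nonempty B) ∨
      k + 1 ≤ #{a | (biasUpdate N w β)^[k] B a < univ.sup' univ_nonempty B} := by
  induction k with
  | zero =>
    obtain ⟨a, ha⟩ := hB
    exact .inr (card_pos.mpr ⟨a, by simpa using ha⟩)
  | succ k ih =>
    rw [Function.iterate_succ_apply']
    rcases ih with hlt | hcard
    · exact .inl ((sup'_biasUpdate_le hw hsum hβ _).trans_lt hlt)
    rcases (sup'_iterate_biasUpdate_le hw hsum hβ B k).lt_or_eq with hlt | hmax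
    · exact .inl ((sup'_biasUpdate_le hw hsum hβ _).trans_lt hlt)
    obtain ⟨a, ha⟩ := card_pos.mp (k.succ_pos.trans_le hcard)
    obtain ⟨i, j, hj, hjC, hiC⟩ := hedge k ⟨a, hmax ▸ (mem_filter.mp ha).2⟩
    have hgrow := card_lt_card (filter_lt_sup'_ssubset_biasUpdate hw hsum hβ hj hjC hiC)
    rw [hmax] at hgrow
    exact .inr (hcard.trans_lt hgrow)

end BiasUpdate

theorem exists_edge_lt_eq_of_path {A : Type*} (N : A → Finset A) (C : A → ℝ) (s : ℝ)
    (hC : ∀ a, C a ≤ s) (m : ℕ) (p : ℕ → A) (hp : ∀ l < m, p l ∈ N (p (l + 1)))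
    (h0 : C (p 0) < s) (hm : C (p m) = s) : ∃ i, ∃ j ∈ N i, C j < s ∧ C i = s := by
  induction m with
  | zero => exact absurd hm h0.ne
  | succ m ih =>
    rcases (hC (p m)).lt_or_eq with hlt | heq
    · exact ⟨p (m + 1), p m, hp m m.lt_succ_self, hlt, hm⟩
    · exact ih (fun l hl => hp l (hl.trans m.lt_succ_self)) heq

theorem stmt_7_general {A : Type*} [Fintype A] [Nonempty A] [DecidableEq A]
    (N : A → Finset A) (E : A → A → Prop) (hNE : ∀ i j, j ∈ N i ↔ E j i)
    (w : A → A → ℝ)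
    (hw : ∀ i, ∀ j ∈ N i, 0 < w j i)
    (hsum : ∀ i, (N i).Nonempty → ∑ j ∈ N i, w j i = 1)
    (β : A → A → ℝ → ℝ) (hβ : ∀ i, ∀ j ∈ N i, InRegionR (β i j))
    (μ : (A → ℝ) → (A → ℝ))
    (hμ : ∀ C i, μ C i = C i + ∑ j ∈ N i, w j i * β i j (C j - C i))
    (B : A → ℝ)
    (hne : Finset.univ.inf' Finset.univ_nonempty B ≠
           Finset.univ.sup' Finset.univ_nonempty B)
    -- in every intermediate state, a directed path from an agent strictly below
    -- the current maximum to an agent at the current maximum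
    (hpath : ∀ k : ℕ,
      Finset.univ.inf' Finset.univ_nonempty (μ^[k] B) ≠
        Finset.univ.sup' Finset.univ_nonempty (μ^[k] B) →
      ∃ (m : ℕ) (p : ℕ → A),
        (∀ l < m, E (p l) (p (l+1))) ∧
        (μ^[k] B) (p 0) < Finset.univ.sup' Finset.univ_nonempty (μ^[k] B) ∧
        (μ^[k] B) (p m) = Finset.univ.sup' Finset.univ_nonempty (μ^[k] B)) :
    Finset.univ.sup' Finset.univ_nonempty (μ^[Fintype.card A - 1] B) <
      Finset.univ.sup' Finset.univ_nonempty B := by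
  obtain rfl : μ = biasUpdate N w β := funext fun C => funext (hμ C)
  have hsum_le : ∀ i, ∑ j ∈ N i, w j i ≤ 1 := fun i =>
    (N i).eq_empty_or_nonempty.elim (fun h => by simp [h]) fun h => (hsum i h).le
  have hB : ∃ a, B a < univ.sup' univ_nonempty B := by
    obtain ⟨a, -, ha⟩ := exists_mem_eq_inf' univ_nonempty B
    rw [ha] at hne
    exact ⟨a, (le_sup' B (mem_univ a)).lt_of_ne hne⟩
  have hedge : ∀ k, let C := (biasUpdate N w β)^[k] B;
      (∃ a, C a < univ.sup' univ_nonempty C) → ∃ i, ∃ j ∈ N i,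
        C j < univ.sup' univ_nonempty C ∧ C i = univ.sup' univ_nonempty C := by
    rintro k C ⟨a, ha⟩
    obtain ⟨m, p, hp, h0, hm⟩ := hpath k ((inf'_le _ (mem_univ a)).trans_lt ha).ne
    exact exists_edge_lt_eq_of_path N _ _ (fun b => le_sup' _ (mem_univ b)) m p
      (fun l hl => (hNE _ _).mpr (hp l hl)) h0 hm
  rcases sup'_iterate_lt_or_card_le hw hsum_le hβ hedge hB (Fintype.card A - 1) with
    hlt | hcard
  · exact hlt
  · have hn : 0 < Fintype.card A := Fintype.card_pos
    exact (sup'_lt_iff _).mpr <| card_filter_eq_iff.mp <|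
      (card_filter_le _ _).antisymm (by rw [card_univ]; omega)

theorem stmt_7 {A : Type*} [Fintype A] [Nonempty A] [DecidableEq A]
    (N : A → Finset A) (E : A → A → Prop) (hNE : ∀ i j, j ∈ N i ↔ E j i)
    (w : A → A → ℝ)
    (hw : ∀ i, ∀ j ∈ N i, 0 < w j i)
    (hsum : ∀ i, (N i).Nonempty → ∑ j ∈ N i, w j i = 1)
    (β : A → A → ℝ → ℝ) (hβ : ∀ i, ∀ j ∈ N i, InRegionR (β i j))
    (μ : (A → ℝ) → (A → ℝ))
    (hμ : ∀ C i, μ C i = C i + ∑ j ∈ N i, w j i * β i j (C j - C i))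
    (B : A → ℝ) (hB : ∀ k, B k ∈ Set.Icc (0:ℝ) 1)
    (hne : Finset.univ.inf' Finset.univ_nonempty B ≠
           Finset.univ.sup' Finset.univ_nonempty B)
    -- in every intermediate state, a directed path from an agent strictly below
    -- the current maximum to an agent at the current maximum
    (hpath : ∀ k : ℕ,
      Finset.univ.inf' Finset.univ_nonempty (μ^[k] B) ≠
        Finset.univ.sup' Finset.univ_nonempty (μ^[k] B) →
      ∃ (m : ℕ) (p : ℕ → A),
        (∀ l < m, E (p l) (p (l+1))) ∧
        (μ^[k] B) (p 0) < Finset.univ.sup' Finset.univ_nonempty (μ^[k] B) ∧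
        (μ^[k] B) (p m) = Finset.univ.sup' Finset.univ_nonempty (μ^[k] B)) :
    Finset.univ.sup' Finset.univ_nonempty (μ^[Fintype.card A - 1] B) <
      Finset.univ.sup' Finset.univ_nonempty B :=
  stmt_7_general N E hNE w hw hsum β hβ μ hμ B hne hpath
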